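/- arXiv:1710.00769 — 7 statements merged into one kernel-verified Lean document; each statement's English description precedes it below -/
import Mathlib

section
/- If a vector x with strictly positive entries weakly supermajorizes a vector y with strictly positive entries, then x is p-larger than y, i.e., for each j = 1,...,n, the product of the j smallest entries of x is at most the product of the j smallest entries of y. -/
open Finset

/-- Increasing rearrangement of a vector. -/
noncomputable def incSort {n : ℕ} (x : Fin n → ℝ) : Fin n → ℝ := x ∘ Tuple.sort x

/-- Sum of the `j` smallest entries. -/
noncomputable def psum {n : ℕ} (s : Fin n → ℝ) (j : ℕ) : ℝ :=
  ∑ i : Fin n, if (i : ℕ) < j then s i else 0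

/-- Product of the `j` smallest entries. -/
noncomputable def pprod {n : ℕ} (s : Fin n → ℝ) (j : ℕ) : ℝ :=
  ∏ i : Fin n, if (i : ℕ) < j then s i else 1

/-- `x` weakly supermajorizes `y`. -/
def WeakSupermajorizes {n : ℕ} (x y : Fin n → ℝ) : Prop :=
  ∀ j ≤ n, psum (incSort x) j ≤ psum (incSort y) j

/-- `x` is p-larger than `y`. -/
def PLarger {n : ℕ} (x y : Fin n → ℝ) : Prop :=
  ∀ j ≤ n, pprod (incSort x) j ≤ pprod (incSort y) j

/-
Let `a`, `b` be the increasing rearrangements of `x`, `y`. Concavity of `log` gives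
`log bᵢ - log aᵢ ≥ (bᵢ - aᵢ) / bᵢ`. The weights `1 / bᵢ` decrease and, by weak supermajorization,
the partial sums of `bᵢ - aᵢ` are nonnegative, so Abel summation makes `∑_{i<j} (bᵢ - aᵢ) / bᵢ`
nonnegative; hence `∑_{i<j} log aᵢ ≤ ∑_{i<j} log bᵢ`.
-/

theorem Real.sub_div_le_log_sub_log {a b : ℝ} (ha : 0 < a) (hb : 0 < b) :
    (b - a) / b ≤ log b - log a := by
  have := one_sub_inv_le_log_of_pos (div_pos hb ha)
  rwa [log_div hb.ne' ha.ne', inv_div, one_sub_div hb.ne'] at this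

theorem Finset.sum_range_mul_nonneg_of_antitoneOn {w e : ℕ → ℝ} {j : ℕ}
    (hw : AntitoneOn w (Set.Iio j)) (hw_nonneg : ∀ i < j, 0 ≤ w i)
    (he : ∀ k ≤ j, 0 ≤ ∑ i ∈ range k, e i) :
    0 ≤ ∑ i ∈ range j, w i * e i := by
  rcases j with _ | j
  · simp
  have h_parts := sum_range_by_parts w e (j + 1)
  simp only [smul_eq_mul, Nat.add_sub_cancel] at h_parts
  rw [h_parts]
  have h_last : 0 ≤ w j * ∑ i ∈ range (j + 1), e i :=
    mul_nonneg (hw_nonneg j j.lt_succ_self) (he (j + 1) le_rfl)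
  have h_steps : ∑ i ∈ range j, (w (i + 1) - w i) * ∑ k ∈ range (i + 1), e k ≤ 0 := by
    refine sum_nonpos fun i hi => ?_
    have hi : i < j := mem_range.mp hi
    refine mul_nonpos_of_nonpos_of_nonneg ?_ (he (i + 1) (by omega))
    exact sub_nonpos.mpr (hw (Set.mem_Iio.mpr (by omega)) (Set.mem_Iio.mpr (by omega)) i.le_succ)
  linarith

@[to_additive]
theorem Fin.prod_univ_ite_lt_eq_prod_range {M : Type*} [CommMonoid M] {n j : ℕ} (hj : j ≤ n)
    (f : ℕ → M) : ∏ i : Fin n, (if (i : ℕ) < j then f i else 1) = ∏ k ∈ range j, f k := by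
  rw [Fin.prod_univ_eq_prod_range (fun k => if k < j then f k else 1), ← prod_filter]
  congr 1
  ext k
  simp only [mem_filter, mem_range]
  omega

theorem Finset.prod_range_le_prod_range_of_sum_range_le {a b : ℕ → ℝ} {j : ℕ}
    (ha : ∀ i < j, 0 < a i) (hb : ∀ i < j, 0 < b i) (hb_mono : MonotoneOn b (Set.Iio j))
    (hab : ∀ k ≤ j, ∑ i ∈ range k, a i ≤ ∑ i ∈ range k, b i) :
    ∏ i ∈ range j, a i ≤ ∏ i ∈ range j, b i := by
  have h_abel : 0 ≤ ∑ i ∈ range j, (b i)⁻¹ * (b i - a i) := by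
    refine sum_range_mul_nonneg_of_antitoneOn ?_ (fun i hi => (inv_pos.mpr (hb i hi)).le) ?_
    · exact fun i hi k hk hik => inv_anti₀ (hb i hi) (hb_mono hi hk hik)
    · intro k hk
      simpa [sum_sub_distrib] using hab k hk
  have h_tangent : ∀ i ∈ range j, (b i)⁻¹ * (b i - a i) ≤ Real.log (b i) - Real.log (a i) :=
    fun i hi => by
      have hi := mem_range.mp hi
      simpa [inv_mul_eq_div] using Real.sub_div_le_log_sub_log (ha i hi) (hb i hi)
  have h_log := h_abel.trans (sum_le_sum h_tangent)
  rw [← Real.log_le_log_iff (prod_pos fun i hi => ha i (mem_range.mp hi))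
      (prod_pos fun i hi => hb i (mem_range.mp hi)),
    Real.log_prod fun i hi => (ha i (mem_range.mp hi)).ne',
    Real.log_prod fun i hi => (hb i (mem_range.mp hi)).ne']
  simpa [sum_sub_distrib] using h_log

def Fin.natExtend {α : Type*} [Inhabited α] {n : ℕ} (s : Fin n → α) (k : ℕ) : α :=
  if h : k < n then s ⟨k, h⟩ else default

theorem Fin.natExtend_of_lt {α : Type*} [Inhabited α] {n k : ℕ} (s : Fin n → α) (hk : k < n) :
    Fin.natExtend s k = s ⟨k, hk⟩ :=
  dif_pos hk

@[simp]
theorem Fin.natExtend_coe {α : Type*} [Inhabited α] {n : ℕ} (s : Fin n → α) (i : Fin n) :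
    Fin.natExtend s i = s i := by
  simp [Fin.natExtend]

theorem Monotone.monotoneOn_natExtend {α : Type*} [Inhabited α] [Preorder α] {n : ℕ}
    {s : Fin n → α} (hs : Monotone s) : MonotoneOn (Fin.natExtend s) (Set.Iio n) :=
  fun i hi k hk hik => by
    simpa [Fin.natExtend, Set.mem_Iio.mp hi, Set.mem_Iio.mp hk] using hs (Fin.mk_le_mk.mpr hik)

theorem psum_eq_sum_range {n j : ℕ} (s : Fin n → ℝ) (hj : j ≤ n) :
    psum s j = ∑ k ∈ range j, Fin.natExtend s k := by
  simpa [psum] using Fin.sum_univ_ite_lt_eq_sum_range hj (Fin.natExtend s)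

theorem pprod_eq_prod_range {n j : ℕ} (s : Fin n → ℝ) (hj : j ≤ n) :
    pprod s j = ∏ k ∈ range j, Fin.natExtend s k := by
  simpa [pprod] using Fin.prod_univ_ite_lt_eq_prod_range hj (Fin.natExtend s)

theorem weak_supermajorizes_implies_plarger {n : ℕ} (x y : Fin n → ℝ)
    (hx : ∀ i, 0 < x i) (hy : ∀ i, 0 < y i)
    (h : WeakSupermajorizes x y) : PLarger x y := by
  intro j hj
  rw [pprod_eq_prod_range _ hj, pprod_eq_prod_range _ hj]
  refine prod_range_le_prod_range_of_sum_range_le (fun i hi => ?_) (fun i hi => ?_)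
    ((Tuple.monotone_sort y).monotoneOn_natExtend.mono (Set.Iio_subset_Iio hj)) fun k hk => ?_
  · rw [Fin.natExtend_of_lt _ (hi.trans_le hj)]
    exact hx _
  · rw [Fin.natExtend_of_lt _ (hi.trans_le hj)]
    exact hy _
  · rw [← psum_eq_sum_range _ (hk.trans hj), ← psum_eq_sum_range _ (hk.trans hj)]
    exact h k (hk.trans hj)
end

section
/- Let X and Y be absolutely continuous random variables with densities f and g supported on an interval, with distribution functions F and G. If the ratio g(t)/f(t) is increasing in t (likelihood ratio order X <=_lr Y), then the ratio of survival functions (1-G(t))/(1-F(t)) is increasing in t (hazard rate order X <=_hr Y). -/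
open MeasureTheory Set

/-- Likelihood ratio order implies hazard rate order, for absolutely continuous
random variables with densities `f`, `g` positive on an interval support `s`. -/
theorem lr_implies_hr (f g : ℝ → ℝ) (s : Set ℝ) (hs : s.OrdConnected)
    (hf_pos : ∀ x ∈ s, 0 < f x) (hg_pos : ∀ x ∈ s, 0 < g x)
    (hf0 : ∀ x ∉ s, f x = 0) (hg0 : ∀ x ∉ s, g x = 0)
    (hf_int : Integrable f) (hg_int : Integrable g)
    (hf1 : ∫ x, f x = 1) (hg1 : ∫ x, g x = 1)
    (F G : ℝ → ℝ)
    (hF : ∀ t, F t = ∫ x in Iic t, f x) (hG : ∀ t, G t = ∫ x in Iic t, g x)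
    (hlr : MonotoneOn (fun t => g t / f t) s) :
    MonotoneOn (fun t => (1 - G t) / (1 - F t)) {t | F t < 1} := by
  have hf_nn : ∀ x, 0 ≤ f x := fun x => by
    by_cases hx : x ∈ s
    · exact (hf_pos x hx).le
    · rw [hf0 x hx]
  have hg_nn : ∀ x, 0 ≤ g x := fun x => by
    by_cases hx : x ∈ s
    · exact (hg_pos x hx).le
    · rw [hg0 x hx]
  -- survival functions as integrals over Ioi
  have hIf : ∀ t, (1 : ℝ) - F t = ∫ x in Ioi t, f x := by
    intro t
    rw [hF, ← hf1, ← intervalIntegral.integral_Iic_add_Ioi hf_int.integrableOn hf_int.integrableOn]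
    ring
  have hIg : ∀ t, (1 : ℝ) - G t = ∫ x in Ioi t, g x := by
    intro t
    rw [hG, ← hg1, ← intervalIntegral.integral_Iic_add_Ioi hg_int.integrableOn hg_int.integrableOn]
    ring
  intro t₁ ht₁ t₂ ht₂ h12
  simp only [mem_setOf_eq] at ht₁ ht₂
  have hB : (0:ℝ) < 1 - F t₁ := by linarith
  have hD : (0:ℝ) < 1 - F t₂ := by linarith
  have hC : (0:ℝ) ≤ 1 - G t₂ := by
    rw [hIg]
    exact setIntegral_nonneg measurableSet_Ioi fun x _ => hg_nn x
  -- differences as integrals over Ioc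
  have hdF : F t₂ - F t₁ = ∫ x in Ioc t₁ t₂, f x := by
    rw [hF, hF, intervalIntegral.integral_Iic_sub_Iic hf_int.integrableOn hf_int.integrableOn,
      intervalIntegral.integral_of_le h12]
  have hdG : G t₂ - G t₁ = ∫ x in Ioc t₁ t₂, g x := by
    rw [hG, hG, intervalIntegral.integral_Iic_sub_Iic hg_int.integrableOn hg_int.integrableOn,
      intervalIntegral.integral_of_le h12]
  set Ig := ∫ x in Ioc t₁ t₂, g x with hIgdef
  set If := ∫ x in Ioc t₁ t₂, f x with hIfdef
  -- pointwise inequality for y > t₂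
  have key : ∀ y ∈ Ioi t₂, Ig * f y ≤ If * g y := by
    intro y hy
    by_cases hys : y ∈ s
    · have h1 : Ig * f y = ∫ x in Ioc t₁ t₂, g x * f y := by
        rw [integral_mul_const]
      have h2 : If * g y = ∫ x in Ioc t₁ t₂, f x * g y := by
        rw [integral_mul_const]
      rw [h1, h2]
      apply setIntegral_mono_on (hg_int.integrableOn.mul_const _)
        (hf_int.integrableOn.mul_const _) measurableSet_Ioc
      intro x hx
      by_cases hxs : x ∈ s
      · have hxy : x ≤ y := le_trans hx.2 (le_of_lt hy)
        have hr := hlr hxs hys hxy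
        simp only at hr
        rw [div_le_div_iff₀ (hf_pos x hxs) (hf_pos y hys)] at hr
        linarith
      · rw [hf0 x hxs, hg0 x hxs]
        simp
    · rw [hf0 y hys, hg0 y hys]
      simp
  -- integrate over Ioi t₂
  have main : Ig * (1 - F t₂) ≤ If * (1 - G t₂) := by
    rw [hIf, hIg, ← integral_const_mul, ← integral_const_mul]
    exact setIntegral_mono_on (hf_int.integrableOn.const_mul _)
      (hg_int.integrableOn.const_mul _) measurableSet_Ioi key
  simp only
  rw [div_le_div_iff₀ hB hD]
  have hA : 1 - G t₁ = (G t₂ - G t₁) + (1 - G t₂) := by ring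
  have hBeq : 1 - F t₁ = (F t₂ - F t₁) + (1 - F t₂) := by ring
  rw [hA, hBeq, hdG, hdF]
  nlinarith [main, hC, hD]
end

section
/- Independent series system, majorized reciprocal scales: Let F, G be distribution functions with hazard rates r_X, r_Y satisfying r_X(u) >= r_Y(u) for all u (X <=_hr Y), and suppose u |-> u r_Y(u) is concave. Let lambda, sigma, xi all be decreasing vectors (lambda_1 >= ... >= lambda_n; sigma, xi positive decreasing). If (1/sigma_1,...,1/sigma_n) is majorized by (1/xi_1,...,1/xi_n), then for all t > lambda_1: sum_{k=1}^n (1/sigma_k) r_X((t - lambda_k)/sigma_k) >= sum_{k=1}^n (1/xi_k) r_Y((t - lambda_k)/xi_k). -/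
/-!
Write `ψ u = u * r_Y u` and `δ_k = t - λ_k > 0`, so that the `k`-th term of the `Y`-side is
`ψ (δ_k / ξ_k) / δ_k`. The supergradient inequality for the concave `ψ` at `δ_k / σ_k`, with the
right derivative `s` of `ψ` as supergradient, bounds it by the `k`-th `σ`-term of `r_Y` plus
`s (δ_k / σ_k) * (1 / ξ_k - 1 / σ_k)`. Since `λ` and `σ` decrease, the points `δ_k / σ_k` increase
in `k`, so the weights `s (δ_k / σ_k)` decrease, and Abel summation against the majorization
makes the correction terms sum to at most `0`. Finally `r_Y ≤ r_X`.
-/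

open Set Finset

theorem ConvexOn.add_rightDeriv_mul_sub_le {S : Set ℝ} {f : ℝ → ℝ} {x y : ℝ}
    (hf : ConvexOn ℝ S f) (hx : x ∈ interior S) (hy : y ∈ S) :
    f x + derivWithin f (Ioi x) x * (y - x) ≤ f y := by
  rcases lt_trichotomy y x with hyx | rfl | hxy
  · have h := (hf.slope_le_leftDeriv_of_mem_interior hy hx hyx).trans
      (hf.leftDeriv_le_rightDeriv_of_mem_interior hx)
    rw [slope_def_field, div_le_iff₀ (sub_pos.2 hyx)] at h
    linarith
  · simp
  · have h := hf.rightDeriv_le_slope_of_mem_interior hx hy hxy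
    rw [slope_def_field, le_div_iff₀ (sub_pos.2 hxy)] at h
    linarith

theorem ConcaveOn.le_add_rightDeriv_mul_sub {S : Set ℝ} {f : ℝ → ℝ} {x y : ℝ}
    (hf : ConcaveOn ℝ S f) (hx : x ∈ interior S) (hy : y ∈ S) :
    f y ≤ f x + derivWithin f (Ioi x) x * (y - x) := by
  have h := hf.neg.add_rightDeriv_mul_sub_le hx hy
  simp only [derivWithin.neg, Pi.neg_apply] at h
  linarith

theorem ConcaveOn.antitoneOn_rightDeriv {S : Set ℝ} {f : ℝ → ℝ} (hf : ConcaveOn ℝ S f) :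
    AntitoneOn (fun x => derivWithin f (Ioi x) x) (interior S) := by
  intro x hx y hy hxy
  simpa only [derivWithin.neg, neg_le_neg_iff] using hf.neg.monotoneOn_rightDeriv hx hy hxy

theorem ConcaveOn.one_div_mul_apply_div_le {r : ℝ → ℝ}
    (hψ : ConcaveOn ℝ (Ioi 0) (fun u => u * r u)) {δ x y : ℝ} (hδ : 0 < δ) (hx : 0 < x)
    (hy : 0 < y) :
    1 / y * r (δ / y) ≤ 1 / x * r (δ / x) +
      derivWithin (fun u => u * r u) (Ioi (δ / x)) (δ / x) * (1 / y - 1 / x) := by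
  have h := hψ.le_add_rightDeriv_mul_sub (x := δ / x) (by rw [interior_Ioi]; exact div_pos hδ hx)
    (Set.mem_Ioi.2 (div_pos hδ hy))
  set s := derivWithin (fun u => u * r u) (Ioi (δ / x)) (δ / x)
  calc 1 / y * r (δ / y) = δ / y * r (δ / y) / δ := by field_simp
    _ ≤ (δ / x * r (δ / x) + s * (δ / y - δ / x)) / δ := by gcongr
    _ = 1 / x * r (δ / x) + s * (1 / y - 1 / x) := by field_simp

theorem sum_range_mul_nonpos_of_antitoneOn {c d : ℕ → ℝ} {n : ℕ} (hc : AntitoneOn c (Set.Iio n))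
    (hd : ∀ j < n, ∑ i ∈ range j, d i ≤ 0) (hdn : ∑ i ∈ range n, d i = 0) :
    ∑ i ∈ range n, c i * d i ≤ 0 := by
  have h := sum_range_by_parts c d n
  simp only [smul_eq_mul] at h
  rw [h, hdn, mul_zero, zero_sub, neg_nonpos]
  refine sum_nonneg fun i hi => ?_
  have hi : i + 1 < n := by rw [Finset.mem_range] at hi; omega
  exact mul_nonneg_of_nonpos_of_nonpos
    (sub_nonpos.2 (hc (Set.mem_Iio.2 (by omega)) (Set.mem_Iio.2 hi) i.le_succ)) (hd _ hi)

theorem Fin.sum_ite_val_lt_eq_sum_range_extend {M : Type*} [AddCommMonoid M] {n j : ℕ}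
    (x : Fin n → M) (hj : j ≤ n) :
    (∑ i : Fin n, if (i : ℕ) < j then x i else 0) =
      ∑ i ∈ range j, Function.extend Fin.val x 0 i := by
  have hrange : {i ∈ range n | i < j} = range j := by
    ext i; simp only [Finset.mem_filter, Finset.mem_range]; omega
  rw [← hrange, Finset.sum_filter, ← Fin.sum_univ_eq_sum_range]
  simp only [Fin.val_injective.extend_apply]

theorem Fin.sum_mul_le_sum_mul_of_antitone {n : ℕ} {c a b : Fin n → ℝ} (hc : Antitone c)
    (hpart : ∀ j < n, (∑ i : Fin n, if (i : ℕ) < j then b i else 0) ≤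
      ∑ i : Fin n, if (i : ℕ) < j then a i else 0)
    (htot : ∑ i, b i = ∑ i, a i) :
    ∑ i, c i * b i ≤ ∑ i, c i * a i := by
  set C := Function.extend Fin.val c 0
  set D := Function.extend Fin.val b 0 - Function.extend Fin.val a 0
  have hpartD : ∀ j ≤ n, ∑ i ∈ range j, D i =
      (∑ i : Fin n, if (i : ℕ) < j then b i else 0) -
        ∑ i : Fin n, if (i : ℕ) < j then a i else 0 := by
    intro j hj
    rw [Fin.sum_ite_val_lt_eq_sum_range_extend b hj, Fin.sum_ite_val_lt_eq_sum_range_extend a hj,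
      ← sum_sub_distrib]
    rfl
  have hanti : AntitoneOn C (Set.Iio n) := by
    intro i hi j hj hij
    have hext := Fin.val_injective.extend_apply c 0
    exact (hext ⟨j, hj⟩).trans_le <|
      (hc (show (⟨i, hi⟩ : Fin n) ≤ ⟨j, hj⟩ from hij)).trans_eq (hext ⟨i, hi⟩).symm
  have hsum := sum_range_mul_nonpos_of_antitoneOn hanti
    (fun j hj => by rw [hpartD j hj.le]; linarith [hpart j hj])
    (by simp only [hpartD n le_rfl, Fin.is_lt, if_true, htot, sub_self])
  rw [← Fin.sum_univ_eq_sum_range (fun i => C i * D i)] at hsum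
  simp only [C, D, Pi.sub_apply, Fin.val_injective.extend_apply, mul_sub, sum_sub_distrib] at hsum
  linarith

theorem series_independent_hr_majorization_general {n : ℕ}
    (rX rY : ℝ → ℝ) (lam σ ξ : Fin n → ℝ)
    (hhr : ∀ u, rY u ≤ rX u)
    (hconc : ConcaveOn ℝ (Ioi 0) (fun u => u * rY u))
    (hlamdec : ∀ i j : Fin n, i ≤ j → lam j ≤ lam i)
    (hσpos : ∀ i, 0 < σ i) (hξpos : ∀ i, 0 < ξ i)
    (hσdec : ∀ i j : Fin n, i ≤ j → σ j ≤ σ i)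
    -- `(1/σ)` is majorized by `(1/ξ)`: both vectors are increasing, so the
    -- partial sums of smallest entries are the initial partial sums
    (hmaj : (∀ j < n, (∑ i : Fin n, if (i : ℕ) < j then 1 / ξ i else 0) ≤
        ∑ i : Fin n, if (i : ℕ) < j then 1 / σ i else 0) ∧
      (∑ i : Fin n, 1 / ξ i) = ∑ i : Fin n, 1 / σ i) :
    ∀ t, (∀ k, lam k < t) →
      (∑ k, (1 / ξ k) * rY ((t - lam k) / ξ k)) ≤
        ∑ k, (1 / σ k) * rX ((t - lam k) / σ k) := by
  intro t ht
  set s := fun u => derivWithin (fun u => u * rY u) (Ioi u) u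
  have hδ : ∀ k, 0 < t - lam k := fun k => sub_pos.2 (ht k)
  have hpoint : Monotone fun k => (t - lam k) / σ k := fun i j hij =>
    div_le_div₀ (hδ j).le (by linarith [hlamdec i j hij]) (hσpos j) (hσdec i j hij)
  have hweight : Antitone fun k => s ((t - lam k) / σ k) := fun i j hij =>
    hconc.antitoneOn_rightDeriv (by rw [interior_Ioi]; exact div_pos (hδ i) (hσpos i))
      (by rw [interior_Ioi]; exact div_pos (hδ j) (hσpos j)) (hpoint hij)
  calc (∑ k, (1 / ξ k) * rY ((t - lam k) / ξ k))
      ≤ ∑ k, ((1 / σ k) * rY ((t - lam k) / σ k) +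
          s ((t - lam k) / σ k) * (1 / ξ k - 1 / σ k)) :=
        sum_le_sum fun k _ => hconc.one_div_mul_apply_div_le (hδ k) (hσpos k) (hξpos k)
    _ = ∑ k, (1 / σ k) * rY ((t - lam k) / σ k) +
          (∑ k, s ((t - lam k) / σ k) * (1 / ξ k) - ∑ k, s ((t - lam k) / σ k) * (1 / σ k)) := by
        simp only [mul_sub, sum_add_distrib, sum_sub_distrib]
    _ ≤ ∑ k, (1 / σ k) * rY ((t - lam k) / σ k) := by
        linarith [Fin.sum_mul_le_sum_mul_of_antitone hweight hmaj.1 hmaj.2]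
    _ ≤ ∑ k, (1 / σ k) * rX ((t - lam k) / σ k) :=
        sum_le_sum fun k _ => mul_le_mul_of_nonneg_left (hhr _) (one_div_pos.2 (hσpos k)).le

/-- Independent series systems (Theorem 4 i of the paper): if `X ≤_hr Y`,
`u·r_Y(u)` is concave, and `(1/σ)` is majorized by `(1/ξ)`, then the hazard
rate of `X_{1:n}` dominates that of `Y_{1:n}`. -/
theorem series_independent_hr_majorization {n : ℕ}
    (F G f g : ℝ → ℝ) (rX rY : ℝ → ℝ) (lam σ ξ : Fin n → ℝ)
    (hF' : ∀ u, HasDerivAt F (f u) u) (hG' : ∀ u, HasDerivAt G (g u) u)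
    (hrX : ∀ u, rX u = f u / (1 - F u)) (hrY : ∀ u, rY u = g u / (1 - G u))
    (hhr : ∀ u, rY u ≤ rX u)
    (hconc : ConcaveOn ℝ (Ioi 0) (fun u => u * rY u))
    (hlamdec : ∀ i j : Fin n, i ≤ j → lam j ≤ lam i)
    (hσpos : ∀ i, 0 < σ i) (hξpos : ∀ i, 0 < ξ i)
    (hσdec : ∀ i j : Fin n, i ≤ j → σ j ≤ σ i)
    (hξdec : ∀ i j : Fin n, i ≤ j → ξ j ≤ ξ i)
    -- `(1/σ)` is majorized by `(1/ξ)`: both vectors are increasing, so the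
    -- partial sums of smallest entries are the initial partial sums
    (hmaj : (∀ j < n, (∑ i : Fin n, if (i : ℕ) < j then 1 / ξ i else 0) ≤
        ∑ i : Fin n, if (i : ℕ) < j then 1 / σ i else 0) ∧
      (∑ i : Fin n, 1 / ξ i) = ∑ i : Fin n, 1 / σ i) :
    ∀ t, (∀ k, lam k < t) →
      (∑ k, (1 / ξ k) * rY ((t - lam k) / ξ k)) ≤
        ∑ k, (1 / σ k) * rX ((t - lam k) / σ k) :=
  series_independent_hr_majorization_general rX rY lam σ ξ hhr hconc hlamdec hσpos hξpos hσdec hmaj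
end

section
/- Schur-concavity step: Let r be a nonnegative function on (0,infinity) such that u |-> u·r(u) is concave. Fix t and a decreasing vector lambda with t > lambda_1. Then Psi(p) = sum_{k=1}^n p_k · r(p_k (t - lambda_k)), defined for increasing positive vectors p (p_1 <= ... <= p_n), is Schur-concave, i.e., p majorizes q implies Psi(p) <= Psi(q). -/
open Set Finset

lemma concave_slope_anti {g : ℝ → ℝ} (hg : ConcaveOn ℝ (Ioi 0) g)
    {x1 y1 x2 y2 : ℝ} (hx1 : 0 < x1) (hx2 : 0 < x2)
    (h1 : x1 < y1) (h2 : x2 < y2) (hx : x1 ≤ x2) (hy : y1 ≤ y2) :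
    (g y2 - g x2) / (y2 - x2) ≤ (g y1 - g x1) / (y1 - x1) := by
  have hy1 : 0 < y1 := hx1.trans h1
  have hy2 : 0 < y2 := hx2.trans h2
  have hf : ConvexOn ℝ (Ioi 0) (fun u => -g u) := hg.neg
  have step1 : (-g y1 - -g x1) / (y1 - x1) ≤ (-g y2 - -g x1) / (y2 - x1) :=
    hf.secant_mono (Set.mem_Ioi.2 hx1) (Set.mem_Ioi.2 hy1) (Set.mem_Ioi.2 hy2)
      (ne_of_gt h1) (ne_of_gt (lt_of_lt_of_le h1 hy)) hy
  have step2 : (-g x1 - -g y2) / (x1 - y2) ≤ (-g x2 - -g y2) / (x2 - y2) :=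
    hf.secant_mono (Set.mem_Ioi.2 hy2) (Set.mem_Ioi.2 hx1) (Set.mem_Ioi.2 hx2)
      (ne_of_lt (lt_of_lt_of_le h1 hy)) (ne_of_lt h2) hx
  have e1 : (-g x1 - -g y2) / (x1 - y2) = (-g y2 - -g x1) / (y2 - x1) := by
    rw [← neg_div_neg_eq]; ring_nf
  have e2 : (-g x2 - -g y2) / (x2 - y2) = (-g y2 - -g x2) / (y2 - x2) := by
    rw [← neg_div_neg_eq]; ring_nf
  rw [e1, e2] at step2
  have key : (-g y1 - -g x1) / (y1 - x1) ≤ (-g y2 - -g x2) / (y2 - x2) := step1.trans step2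
  have e3 : (-g y1 - -g x1) / (y1 - x1) = -((g y1 - g x1) / (y1 - x1)) := by ring
  have e4 : (-g y2 - -g x2) / (y2 - x2) = -((g y2 - g x2) / (y2 - x2)) := by ring
  rw [e3, e4] at key
  linarith

lemma abel_nonneg (M D : ℕ → ℝ) (n : ℕ)
    (hM : ∀ i, i + 1 < n → M (i + 1) ≤ M i)
    (hD : ∀ j, j ≤ n → 0 ≤ ∑ i ∈ range j, D i)
    (hDn : ∑ i ∈ range n, D i = 0) :
    0 ≤ ∑ i ∈ range n, M i * D i := by
  have h := Finset.sum_range_by_parts M D n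
  simp only [smul_eq_mul] at h
  rw [h, hDn, mul_zero, zero_sub, neg_nonneg]
  apply Finset.sum_nonpos
  intro i hi
  rw [Finset.mem_range] at hi
  have h1 : i + 1 < n := by omega
  exact mul_nonpos_of_nonpos_of_nonneg (sub_nonpos.2 (hM i h1)) (hD (i + 1) (by omega))

lemma sum_if_lt (F : ℕ → ℝ) {j n : ℕ} (hj : j ≤ n) :
    (∑ i ∈ range n, if i < j then F i else 0) = ∑ i ∈ range j, F i := by
  rw [← Finset.sum_subset (Finset.range_subset_range.2 hj) (fun x _ hx => by
    rw [Finset.mem_range, not_lt] at hx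
    simp [Nat.not_lt.2 hx])]
  exact Finset.sum_congr rfl fun i hi => by simp [Finset.mem_range.1 hi]

lemma fin_prefix_sum {n : ℕ} (v : Fin n → ℝ) {j : ℕ} (hj : j ≤ n) :
    (∑ i : Fin n, if (i : ℕ) < j then v i else 0)
      = ∑ i ∈ range j, (if h : i < n then v ⟨i, h⟩ else 0) := by
  rw [← sum_if_lt (fun i => if h : i < n then v ⟨i, h⟩ else 0) hj,
    ← Fin.sum_univ_eq_sum_range (fun i => if i < j then (if h : i < n then v ⟨i, h⟩ else 0) else 0) n]
  exact Finset.sum_congr rfl fun i _ => by simp [i.isLt]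


/-- Schur-concavity step: if `u·r(u)` is concave on `(0,∞)`, then
`Ψ(p) = ∑ pₖ · r(pₖ(t - λₖ))` is Schur-concave on the increasing positive cone:
`p` majorizes `q` implies `Ψ(p) ≤ Ψ(q)`. -/
theorem series_sum_schur_concave {n : ℕ} (r : ℝ → ℝ) (t : ℝ) (lam : Fin n → ℝ)
    (hrnonneg : ∀ u ∈ Ioi (0:ℝ), 0 ≤ r u)
    (hconc : ConcaveOn ℝ (Ioi 0) (fun u => u * r u))
    (hlamdec : ∀ i j : Fin n, i ≤ j → lam j ≤ lam i)
    (ht : ∀ k, lam k < t) :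
    ∀ p q : Fin n → ℝ,
      ((∀ i, 0 < p i) ∧ ∀ i j : Fin n, i ≤ j → p i ≤ p j) →
      ((∀ i, 0 < q i) ∧ ∀ i j : Fin n, i ≤ j → q i ≤ q j) →
      -- `p` majorizes `q` (both increasing, so sorted)
      ((∀ j ≤ n, (∑ i : Fin n, if (i : ℕ) < j then p i else 0) ≤
          ∑ i : Fin n, if (i : ℕ) < j then q i else 0) ∧ (∑ i, p i) = ∑ i, q i) →
      (∑ k, p k * r (p k * (t - lam k))) ≤ ∑ k, q k * r (q k * (t - lam k)) := by
  intro p q hp hq hmajs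
  obtain ⟨hp0, hpm⟩ := hp
  obtain ⟨hq0, hqm⟩ := hq
  obtain ⟨hmaj, hsum⟩ := hmajs
  rcases Nat.eq_zero_or_pos n with hn0 | hn
  · subst hn0; simp
  set g : ℝ → ℝ := fun u => u * r u with hgdef
  set c : Fin n → ℝ := fun k => t - lam k with hcdef
  have hc : ∀ k, 0 < c k := fun k => sub_pos.2 (ht k)
  set a : Fin n → ℝ := fun k => p k * c k with hadef
  set b : Fin n → ℝ := fun k => q k * c k with hbdef
  have ha0 : ∀ k, 0 < a k := fun k => mul_pos (hp0 k) (hc k)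
  have hb0 : ∀ k, 0 < b k := fun k => mul_pos (hq0 k) (hc k)
  have hcm : ∀ i j : Fin n, i ≤ j → c i ≤ c j := fun i j h => by
    simp only [hcdef]; linarith [hlamdec i j h]
  have ham : ∀ i j : Fin n, i ≤ j → a i ≤ a j := fun i j h =>
    mul_le_mul (hpm i j h) (hcm i j h) (hc i).le (hp0 j).le
  have hbm : ∀ i j : Fin n, i ≤ j → b i ≤ b j := fun i j h =>
    mul_le_mul (hqm i j h) (hcm i j h) (hc i).le (hq0 j).le
  -- choice of δ
  have hne : (univ : Finset (Fin n)).Nonempty := ⟨⟨0, hn⟩, mem_univ _⟩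
  set e : Fin n → ℝ := fun k => if a k < b k then min (b k - a k) (b k) else b k with hedef
  have he0 : ∀ k, 0 < e k := by
    intro k
    simp only [hedef]
    split
    · exact lt_min (by linarith) (hb0 k)
    · exact hb0 k
  set δ : ℝ := (univ.inf' hne e) / 2 with hδdef
  have hδ0 : 0 < δ := by
    apply div_pos _ two_pos
    exact (Finset.lt_inf'_iff hne).2 fun k _ => he0 k
  have hδe : ∀ k, δ ≤ e k / 2 := fun k => by
    have := Finset.inf'_le e (mem_univ k)
    rw [hδdef]; linarith
  have heb : ∀ k, e k ≤ b k := by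
    intro k
    simp only [hedef]
    split
    · exact min_le_right _ _
    · exact le_refl _
  have hδb : ∀ k, δ < b k := fun k => by
    have := hδe k; have := heb k; have := he0 k; linarith
  have hδab : ∀ k, a k < b k → a k < b k - δ := by
    intro k h
    have h1 : e k ≤ b k - a k := by simp only [hedef, if_pos h]; exact min_le_left _ _
    have := hδe k; have := he0 k; linarith
  set x : Fin n → ℝ := fun k => min (a k) (b k - δ) with hxdef
  have hx0 : ∀ k, 0 < x k := fun k => lt_min (ha0 k) (by linarith [hδb k])
  have hxb : ∀ k, x k < b k := fun k => (min_le_right _ _).trans_lt (by linarith [hδ0])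
  have hxm : ∀ i j : Fin n, i ≤ j → x i ≤ x j := fun i j h =>
    min_le_min (ham i j h) (sub_le_sub_right (hbm i j h) δ)
  set m : Fin n → ℝ := fun k => (g (b k) - g (x k)) / (b k - x k) with hmdef
  have hmanti : ∀ i j : Fin n, i ≤ j → m j ≤ m i := fun i j h =>
    concave_slope_anti hconc (hx0 i) (hx0 j) (hxb i) (hxb j) (hxm i j h) (hbm i j h)
  have claimA : ∀ k, m k * (b k - a k) ≤ g (b k) - g (a k) := by
    intro k
    rcases lt_trichotomy (a k) (b k) with hlt | heq | hgt
    · have hxk : x k = a k := by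
        simp only [hxdef]; exact min_eq_left (le_of_lt (hδab k hlt))
      simp only [hmdef, hxk]
      rw [div_mul_cancel₀ _ (sub_ne_zero.2 (ne_of_gt hlt))]
    · rw [heq]; simp
    · have hs := hconc.slope_anti_adjacent (Set.mem_Ioi.2 (hx0 k)) (Set.mem_Ioi.2 (ha0 k))
        (hxb k) hgt
      have hm' : (g (a k) - g (b k)) / (a k - b k) ≤ m k := hs
      have hab : (0:ℝ) < a k - b k := sub_pos.2 hgt
      have h1 : (g (a k) - g (b k)) / (a k - b k) * (a k - b k) ≤ m k * (a k - b k) :=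
        mul_le_mul_of_nonneg_right hm' hab.le
      rw [div_mul_cancel₀ _ (ne_of_gt hab)] at h1
      have h2 : m k * (b k - a k) = -(m k * (a k - b k)) := by ring
      linarith
  have claimA' : ∀ k : Fin n, m k * (q k - p k) ≤ (g (b k) - g (a k)) / c k := by
    intro k
    have h1 : q k - p k = (b k - a k) / c k := by
      simp only [hbdef, hadef]
      rw [eq_div_iff (ne_of_gt (hc k))]; ring
    rw [h1, mul_div_assoc']
    gcongr
    · exact (hc k).le
    · exact claimA k
  -- Abel summation
  set M : ℕ → ℝ := fun i => if h : i < n then m ⟨i, h⟩ else 0 with hMdef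
  set D : ℕ → ℝ := fun i => if h : i < n then q ⟨i, h⟩ - p ⟨i, h⟩ else 0 with hDdef
  have hDsplit : ∀ i, D i = (if h : i < n then q ⟨i, h⟩ else 0) - (if h : i < n then p ⟨i, h⟩ else 0) := by
    intro i; by_cases h : i < n <;> simp [hDdef, h]
  have hDpre : ∀ j, j ≤ n → ∑ i ∈ range j, D i =
      (∑ i : Fin n, if (i : ℕ) < j then q i else 0) -
      (∑ i : Fin n, if (i : ℕ) < j then p i else 0) := by
    intro j hj
    rw [fin_prefix_sum q hj, fin_prefix_sum p hj, ← Finset.sum_sub_distrib]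
    exact Finset.sum_congr rfl fun i _ => hDsplit i
  have hD : ∀ j, j ≤ n → 0 ≤ ∑ i ∈ range j, D i := by
    intro j hj
    rw [hDpre j hj]
    linarith [hmaj j hj]
  have hDn : ∑ i ∈ range n, D i = 0 := by
    rw [hDpre n le_rfl]
    have e1 : (∑ i : Fin n, if (i : ℕ) < n then q i else 0) = ∑ i, q i :=
      Finset.sum_congr rfl fun i _ => by simp [i.isLt]
    have e2 : (∑ i : Fin n, if (i : ℕ) < n then p i else 0) = ∑ i, p i :=
      Finset.sum_congr rfl fun i _ => by simp [i.isLt]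
    rw [e1, e2, hsum]; ring
  have hM : ∀ i, i + 1 < n → M (i + 1) ≤ M i := by
    intro i h
    have h' : i < n := by omega
    simp only [hMdef, dif_pos h, dif_pos h']
    exact hmanti ⟨i, h'⟩ ⟨i + 1, h⟩ (by simp [Fin.mk_le_mk])
  have habel : 0 ≤ ∑ i ∈ range n, M i * D i := abel_nonneg M D n hM hD hDn
  have hconv : ∑ i ∈ range n, M i * D i = ∑ k : Fin n, m k * (q k - p k) := by
    rw [← Fin.sum_univ_eq_sum_range (fun i => M i * D i) n]
    exact Finset.sum_congr rfl fun k _ => by simp [hMdef, hDdef, k.isLt]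
  have h2 : 0 ≤ ∑ k : Fin n, (g (b k) - g (a k)) / c k := by
    calc (0:ℝ) ≤ ∑ i ∈ range n, M i * D i := habel
    _ = ∑ k : Fin n, m k * (q k - p k) := hconv
    _ ≤ ∑ k : Fin n, (g (b k) - g (a k)) / c k :=
        Finset.sum_le_sum fun k _ => claimA' k
  have hrwp : (∑ k, p k * r (p k * (t - lam k))) = ∑ k, g (a k) / c k := by
    apply Finset.sum_congr rfl
    intro k _
    simp only [hgdef, hadef, hcdef]
    rw [eq_div_iff (ne_of_gt (sub_pos.2 (ht k)))]
    ring
  have hrwq : (∑ k, q k * r (q k * (t - lam k))) = ∑ k, g (b k) / c k := by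
    apply Finset.sum_congr rfl
    intro k _
    simp only [hgdef, hbdef, hcdef]
    rw [eq_div_iff (ne_of_gt (sub_pos.2 (ht k)))]
    ring
  have h3 : ∑ k : Fin n, (g (b k) - g (a k)) / c k =
      (∑ k : Fin n, g (b k) / c k) - ∑ k : Fin n, g (a k) / c k := by
    rw [← Finset.sum_sub_distrib]
    exact Finset.sum_congr rfl fun k _ => by rw [sub_div]
  rw [hrwp, hrwq]
  linarith
end

section
/- If additionally u·r(u) is increasing and concave, then under the same setup as the previous statement, (1/sigma) weakly supermajorized by (1/xi) already implies sum_k (1/sigma_k) r((t - lambda_k)/sigma_k) >= sum_k (1/xi_k) r((t - lambda_k)/xi_k) for all t > lambda_1. -/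
open Set Finset

/-- A concave function on `Ioi 0` has a supergradient at every positive point. -/
lemma exists_supergrad (f : ℝ → ℝ) (hconc : ConcaveOn ℝ (Ioi 0) f) :
    ∃ S : ℝ → ℝ, ∀ u ∈ Ioi (0:ℝ), ∀ v ∈ Ioi (0:ℝ), f v ≤ f u + S u * (v - u) := by
  refine ⟨fun u => sInf ((fun w => (f u - f w) / (u - w)) '' Ioo 0 u), ?_⟩
  intro u hu v hv
  simp only [Set.mem_Ioi] at hu hv
  set E : Set ℝ := (fun w => (f u - f w) / (u - w)) '' Ioo 0 u with hE
  have hne : E.Nonempty := ⟨_, ⟨u / 2, ⟨by linarith, by linarith⟩, rfl⟩⟩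
  have hbdd : BddBelow E := by
    refine ⟨(f (u + 1) - f u) / (u + 1 - u), ?_⟩
    rintro z ⟨w, ⟨hw0, hwu⟩, rfl⟩
    exact hconc.slope_anti_adjacent (mem_Ioi.mpr hw0) (mem_Ioi.mpr (by linarith)) hwu
      (by linarith)
  rcases lt_trichotomy v u with hlt | heq | hgt
  · have h1 : sInf E ≤ (f u - f v) / (u - v) := csInf_le hbdd ⟨v, ⟨hv, hlt⟩, rfl⟩
    have huv : (0:ℝ) < u - v := by linarith
    have h2 : sInf E * (u - v) ≤ f u - f v := by
      calc sInf E * (u - v) ≤ ((f u - f v) / (u - v)) * (u - v) :=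
            mul_le_mul_of_nonneg_right h1 huv.le
        _ = f u - f v := by field_simp
    have h3 : sInf E * (v - u) = -(sInf E * (u - v)) := by ring
    linarith
  · subst heq; simp
  · have h1 : (f v - f u) / (v - u) ≤ sInf E := by
      refine le_csInf hne ?_
      rintro z ⟨w, ⟨hw0, hwu⟩, rfl⟩
      exact hconc.slope_anti_adjacent (mem_Ioi.mpr hw0) (mem_Ioi.mpr hv) hwu hgt
    have huv : (0:ℝ) < v - u := by linarith
    have h2 : f v - f u ≤ sInf E * (v - u) := by
      calc f v - f u = ((f v - f u) / (v - u)) * (v - u) := by field_simp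
        _ ≤ sInf E * (v - u) := mul_le_mul_of_nonneg_right h1 huv.le
    linarith

/-- Rewriting a truncated `Fin` sum as a `range` prefix sum. -/
lemma prefix_sum_eq {n : ℕ} (g : Fin n → ℝ) {j : ℕ} (hjn : j ≤ n) :
    ∑ k ∈ Finset.range j, (if h : k < n then g ⟨k, h⟩ else 0) =
      ∑ i : Fin n, if (i : ℕ) < j then g i else 0 := by
  calc ∑ k ∈ Finset.range j, (if h : k < n then g ⟨k, h⟩ else 0)
      = ∑ k ∈ Finset.range j,
          (if h : k < n then (if k < j then g ⟨k, h⟩ else 0) else 0) := by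
        refine Finset.sum_congr rfl fun k hk => ?_
        have hkj := Finset.mem_range.mp hk
        have hkn := lt_of_lt_of_le hkj hjn
        rw [dif_pos hkn, dif_pos hkn, if_pos hkj]
    _ = ∑ k ∈ Finset.range n,
          (if h : k < n then (if k < j then g ⟨k, h⟩ else 0) else 0) := by
        refine Finset.sum_subset (Finset.range_subset_range.mpr hjn) fun x hx hxj => ?_
        rw [dif_pos (Finset.mem_range.mp hx),
          if_neg (fun h => hxj (Finset.mem_range.mpr h))]
    _ = ∑ i : Fin n, if (i : ℕ) < j then g i else 0 :=
        (Finset.sum_fin_eq_sum_range (fun i : Fin n =>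
          if (i : ℕ) < j then g i else 0)).symm

/-- Abel-summation estimate: nonnegative antitone weights against a sequence with
nonpositive prefix sums give a nonpositive sum. -/
lemma abel_nonpos (s d : ℕ → ℝ) (n : ℕ)
    (hs_anti : ∀ i j, i ≤ j → j < n → s j ≤ s i)
    (hs_nonneg : ∀ i, i < n → 0 ≤ s i)
    (hD : ∀ j, j ≤ n → ∑ k ∈ Finset.range j, d k ≤ 0) :
    ∑ k ∈ Finset.range n, s k * d k ≤ 0 := by
  rcases Nat.eq_zero_or_pos n with rfl | hn
  · simp
  have key : ∀ m, 1 ≤ m → m ≤ n →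
      ∑ k ∈ Finset.range m, s k * d k ≤ s (m - 1) * ∑ k ∈ Finset.range m, d k := by
    intro m
    induction m with
    | zero => omega
    | succ m ih =>
      intro _ hmn
      rcases Nat.eq_zero_or_pos m with rfl | hm
      · simp
      · have h1 := ih hm (by omega)
        rw [Finset.sum_range_succ, Finset.sum_range_succ (f := d)]
        have hDm := hD m (by omega)
        have hsm : s m ≤ s (m - 1) := hs_anti (m - 1) m (by omega) (by omega)
        have h2 : s (m - 1) * ∑ k ∈ Finset.range m, d k ≤
            s m * ∑ k ∈ Finset.range m, d k := mul_le_mul_of_nonpos_right hsm hDm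
        have h3 : s m * (∑ k ∈ Finset.range m, d k + d m) =
            s m * ∑ k ∈ Finset.range m, d k + s m * d m := by ring
        have hmm : m + 1 - 1 = m := by omega
        rw [hmm, h3]
        linarith
  have h := key n hn le_rfl
  have hD_n := hD n le_rfl
  have hs_n := hs_nonneg (n - 1) (by omega)
  have := mul_nonpos_of_nonneg_of_nonpos hs_n hD_n
  linarith

/-- If `u·r(u)` is increasing and concave, weak supermajorization of `(1/σ)` by
`(1/ξ)` already implies the hazard-rate sum comparison for series systems. -/
theorem series_weak_supermaj_comparison {n : ℕ}
    (r : ℝ → ℝ) (lam σ ξ : Fin n → ℝ)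
    (hrnonneg : ∀ u ∈ Ioi (0:ℝ), 0 ≤ r u)
    (hmono : MonotoneOn (fun u => u * r u) (Ioi 0))
    (hconc : ConcaveOn ℝ (Ioi 0) (fun u => u * r u))
    (hlamdec : ∀ i j : Fin n, i ≤ j → lam j ≤ lam i)
    (hσpos : ∀ i, 0 < σ i) (hξpos : ∀ i, 0 < ξ i)
    (hσdec : ∀ i j : Fin n, i ≤ j → σ j ≤ σ i)
    (hξdec : ∀ i j : Fin n, i ≤ j → ξ j ≤ ξ i)
    -- `(1/σ)` is weakly supermajorized by `(1/ξ)`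
    (hmaj : ∀ j ≤ n, (∑ i : Fin n, if (i : ℕ) < j then 1 / ξ i else 0) ≤
      ∑ i : Fin n, if (i : ℕ) < j then 1 / σ i else 0) :
    ∀ t, (∀ k, lam k < t) →
      (∑ k, (1 / ξ k) * r ((t - lam k) / ξ k)) ≤
        ∑ k, (1 / σ k) * r ((t - lam k) / σ k) := by
  intro t ht
  classical
  set f : ℝ → ℝ := fun u => u * r u with hf
  obtain ⟨S, hS⟩ := exists_supergrad f hconc
  have hcpos : ∀ k : Fin n, 0 < t - lam k := fun k => by have := ht k; linarith
  have huσ : ∀ k : Fin n, 0 < (t - lam k) / σ k := fun k => div_pos (hcpos k) (hσpos k)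
  have huξ : ∀ k : Fin n, 0 < (t - lam k) / ξ k := fun k => div_pos (hcpos k) (hξpos k)
  -- S is antitone on positive reals
  have Santi : ∀ u ∈ Ioi (0:ℝ), ∀ v ∈ Ioi (0:ℝ), u ≤ v → S v ≤ S u := by
    intro u hu v hv huv
    rcases eq_or_lt_of_le huv with rfl | hlt
    · exact le_refl _
    · have h1 := hS u hu v hv
      have h2 := hS v hv u hu
      nlinarith
  -- S is nonnegative on positive reals
  have Snn : ∀ u ∈ Ioi (0:ℝ), 0 ≤ S u := by
    intro u hu
    have hu' : (0:ℝ) < u := hu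
    have h1 := hS u hu (u + 1) (mem_Ioi.mpr (by linarith))
    have h2 : f u ≤ f (u + 1) := hmono hu (mem_Ioi.mpr (by linarith)) (by linarith)
    nlinarith
  -- per-index supergradient inequality
  have key : ∀ k : Fin n,
      (1 / ξ k) * r ((t - lam k) / ξ k) - (1 / σ k) * r ((t - lam k) / σ k) ≤
        S ((t - lam k) / σ k) * (1 / ξ k - 1 / σ k) := by
    intro k
    have h := hS _ (mem_Ioi.mpr (huσ k)) _ (mem_Ioi.mpr (huξ k))
    simp only [hf] at h
    have hc := hcpos k
    set c := t - lam k
    set a := ξ k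
    set b := σ k
    set X := r (c / a)
    set Y := r (c / b)
    set s0 := S (c / b)
    -- h : (c/a) * X ≤ (c/b) * Y + s0 * (c/a - c/b)
    have h2 : c * (1 / a * X - 1 / b * Y) ≤ c * (s0 * (1 / a - 1 / b)) := by
      have e1 : c * (1 / a * X - 1 / b * Y) = c / a * X - c / b * Y := by ring
      have e2 : c * (s0 * (1 / a - 1 / b)) = s0 * (c / a - c / b) := by ring
      rw [e1, e2]; linarith
    exact le_of_mul_le_mul_left h2 hc
  -- package into ℕ-indexed sequences
  set sN : ℕ → ℝ := fun k => if h : k < n then S ((t - lam ⟨k, h⟩) / σ ⟨k, h⟩) else 0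
    with hsN
  set dN : ℕ → ℝ := fun k =>
    (if h : k < n then 1 / ξ ⟨k, h⟩ else 0) - (if h : k < n then 1 / σ ⟨k, h⟩ else 0)
    with hdN
  have habel : ∑ k ∈ Finset.range n, sN k * dN k ≤ 0 := by
    apply abel_nonpos
    · intro i j hij hjn
      have hin : i < n := lt_of_le_of_lt hij hjn
      simp only [hsN]
      rw [dif_pos hin, dif_pos hjn]
      refine Santi _ (mem_Ioi.mpr (huσ ⟨i, hin⟩)) _ (mem_Ioi.mpr (huσ ⟨j, hjn⟩)) ?_
      refine div_le_div₀ (hcpos ⟨j, hjn⟩).le ?_ (hσpos ⟨j, hjn⟩) ?_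
      · have := hlamdec ⟨i, hin⟩ ⟨j, hjn⟩ hij
        linarith
      · exact hσdec ⟨i, hin⟩ ⟨j, hjn⟩ hij
    · intro i hin
      simp only [hsN]
      rw [dif_pos hin]
      exact Snn _ (mem_Ioi.mpr (huσ ⟨i, hin⟩))
    · intro j hjn
      simp only [hdN]
      rw [Finset.sum_sub_distrib]
      have ep := prefix_sum_eq (fun i => 1 / ξ i) hjn
      have eq' := prefix_sum_eq (fun i => 1 / σ i) hjn
      rw [ep, eq']
      linarith [hmaj j hjn]
  have hsum2 : ∑ k : Fin n, S ((t - lam k) / σ k) * (1 / ξ k - 1 / σ k) =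
      ∑ k ∈ Finset.range n, sN k * dN k := by
    rw [← Fin.sum_univ_eq_sum_range (fun k => sN k * dN k) n]
    refine Finset.sum_congr rfl fun k _ => ?_
    simp only [hsN, hdN]
    rw [dif_pos k.isLt, dif_pos k.isLt, dif_pos k.isLt]
  have hsum1 : ∑ k : Fin n,
      ((1 / ξ k) * r ((t - lam k) / ξ k) - (1 / σ k) * r ((t - lam k) / σ k)) ≤
      ∑ k : Fin n, S ((t - lam k) / σ k) * (1 / ξ k - 1 / σ k) :=
    Finset.sum_le_sum fun k _ => key k
  rw [Finset.sum_sub_distrib] at hsum1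
  rw [hsum2] at hsum1
  linarith
end

section
/- p-larger ordering for series systems: Let r be a hazard rate function such that u·r(u) is increasing and u·d/du[u·r(u)] is decreasing in u. Fix t and a decreasing vector lambda with t > lambda_1, and decreasing positive vectors sigma, xi. If (1/sigma) <=_p (1/xi), then sum_k (1/sigma_k) r((t-lambda_k)/sigma_k) >= sum_k (1/xi_k) r((t-lambda_k)/xi_k). -/
open Set Finset

lemma abel_nonneg' (n : ℕ) (a g : ℕ → ℝ)
    (ha : ∀ i j, i ≤ j → j < n → a j ≤ a i)
    (ha0 : ∀ i, i < n → 0 ≤ a i)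
    (hS : ∀ j ≤ n, 0 ≤ ∑ i ∈ Finset.range j, g i) :
    0 ≤ ∑ i ∈ Finset.range n, a i * g i := by
  induction n generalizing a with
  | zero => simp
  | succ m ih =>
    have key : ∑ i ∈ Finset.range (m+1), a i * g i
        = (∑ i ∈ Finset.range (m+1), (a i - a m) * g i)
          + a m * ∑ i ∈ Finset.range (m+1), g i := by
      rw [Finset.mul_sum, ← Finset.sum_add_distrib]
      exact Finset.sum_congr rfl fun i _ => by ring
    have h1 : ∑ i ∈ Finset.range (m+1), (a i - a m) * g i
        = ∑ i ∈ Finset.range m, (a i - a m) * g i := by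
      rw [Finset.sum_range_succ]; simp
    have h2 : 0 ≤ ∑ i ∈ Finset.range m, (a i - a m) * g i := by
      apply ih (fun i => a i - a m)
      · intro i j hij hj
        have := ha i j hij (Nat.lt_succ_of_lt hj); linarith
      · intro i hi
        have := ha i m (Nat.le_of_lt hi) (Nat.lt_succ_self m); linarith
      · intro j hj; exact hS j (Nat.le_succ_of_le hj)
    have h3 : 0 ≤ a m * ∑ i ∈ Finset.range (m+1), g i :=
      mul_nonneg (ha0 m (Nat.lt_succ_self m)) (hS (m+1) le_rfl)
    rw [key, h1]; linarith

lemma sum_ite_range (n j : ℕ) (hj : j ≤ n) (d : ℕ → ℝ) :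
    ∑ i ∈ Finset.range n, (if i < j then d i else 0) = ∑ i ∈ Finset.range j, d i := by
  rw [← Finset.sum_filter]
  congr 1
  ext a
  simp only [Finset.mem_filter, Finset.mem_range]
  omega

/-- p-larger ordering for series systems: if `u·r(u)` is increasing,
`u·(d/du)[u·r(u)]` is decreasing, and `(1/σ) ≤_p (1/ξ)`, then the hazard-rate
sums of the minima are ordered. -/
theorem series_p_order_comparison {n : ℕ}
    (r D : ℝ → ℝ) (lam σ ξ : Fin n → ℝ)
    (hrnonneg : ∀ u ∈ Ioi (0:ℝ), 0 ≤ r u)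
    (hD : ∀ u ∈ Ioi (0:ℝ), HasDerivAt (fun v => v * r v) (D u) u)
    (hmono : MonotoneOn (fun u => u * r u) (Ioi 0))
    (hUD : AntitoneOn (fun u => u * D u) (Ioi 0))
    (hlamdec : ∀ i j : Fin n, i ≤ j → lam j ≤ lam i)
    (hσpos : ∀ i, 0 < σ i) (hξpos : ∀ i, 0 < ξ i)
    (hσdec : ∀ i j : Fin n, i ≤ j → σ j ≤ σ i)
    (hξdec : ∀ i j : Fin n, i ≤ j → ξ j ≤ ξ i)
    -- `(1/σ) ≤_p (1/ξ)`: partial products of the smallest entries of `1/ξ`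
    -- are at most those of `1/σ` (both vectors increasing, hence sorted)
    (hp : ∀ j ≤ n, (∏ i : Fin n, if (i : ℕ) < j then 1 / ξ i else 1) ≤
      ∏ i : Fin n, if (i : ℕ) < j then 1 / σ i else 1) :
    ∀ t, (∀ k, lam k < t) →
      (∑ k, (1 / ξ k) * r ((t - lam k) / ξ k)) ≤
        ∑ k, (1 / σ k) * r ((t - lam k) / σ k) := by
  intro t ht
  -- setup
  set c : Fin n → ℝ := fun k => t - lam k with hcdef
  have hcpos : ∀ k, 0 < c k := fun k => sub_pos.2 (ht k)
  have hcmono : ∀ i j : Fin n, i ≤ j → c i ≤ c j := fun i j h => by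
    simp only [hcdef]; have := hlamdec i j h; linarith
  set p : Fin n → ℝ := fun k => Real.log (1 / σ k) with hpdef
  set q : Fin n → ℝ := fun k => Real.log (1 / ξ k) with hqdef
  have hexpp : ∀ k, Real.exp (p k) = 1 / σ k := fun k =>
    Real.exp_log (one_div_pos.2 (hσpos k))
  have hexpq : ∀ k, Real.exp (q k) = 1 / ξ k := fun k =>
    Real.exp_log (one_div_pos.2 (hξpos k))
  have hpmono : ∀ i j : Fin n, i ≤ j → p i ≤ p j := fun i j h =>
    Real.log_le_log (one_div_pos.2 (hσpos i)) (one_div_le_one_div_of_le (hσpos j) (hσdec i j h))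
  have hqmono : ∀ i j : Fin n, i ≤ j → q i ≤ q j := fun i j h =>
    Real.log_le_log (one_div_pos.2 (hξpos i)) (one_div_le_one_div_of_le (hξpos j) (hξdec i j h))
  -- D is nonnegative on Ioi 0
  have hDnonneg : ∀ u ∈ Ioi (0:ℝ), 0 ≤ D u := by
    intro u hu
    have htend : Filter.Tendsto (slope (fun v => v * r v) u)
        (nhdsWithin u (Ioi u)) (nhds (D u)) :=
      (hasDerivAt_iff_tendsto_slope.1 (hD u hu)).mono_left
        (nhdsWithin_mono _ (fun x hx => ne_of_gt hx))
    refine ge_of_tendsto htend ?_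
    filter_upwards [self_mem_nhdsWithin] with x hx
    have hx' : u < x := hx
    rw [slope_def_field]
    apply div_nonneg _ (by linarith)
    have hxpos : (0:ℝ) < x := lt_trans hu hx'
    exact sub_nonneg.2 (hmono hu hxpos hx'.le)
  -- partial-sum hypothesis on p - q
  have hPS : ∀ j ≤ n, 0 ≤ ∑ i ∈ Finset.range j,
      (if h : i < n then p ⟨i, h⟩ - q ⟨i, h⟩ else 0) := by
    intro j hj
    have posξ : ∀ i : Fin n, (0:ℝ) < if (i:ℕ) < j then 1 / ξ i else 1 := fun i => by
      split
      · exact one_div_pos.2 (hξpos i)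
      · norm_num
    have posσ : ∀ i : Fin n, (0:ℝ) < if (i:ℕ) < j then 1 / σ i else 1 := fun i => by
      split
      · exact one_div_pos.2 (hσpos i)
      · norm_num
    have hlog := Real.log_le_log (Finset.prod_pos (fun i _ => posξ i)) (hp j hj)
    rw [Real.log_prod (fun i _ => (posξ i).ne'),
        Real.log_prod (fun i _ => (posσ i).ne')] at hlog
    have hsq : ∀ (v : Fin n → ℝ),
        (∑ i : Fin n, Real.log (if (i:ℕ) < j then v i else 1)) =
        ∑ i : Fin n, (if (i:ℕ) < j then Real.log (v i) else 0) := by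
      intro v
      exact Finset.sum_congr rfl fun i _ => by
        by_cases h : (i:ℕ) < j <;> simp [h]
    rw [hsq, hsq] at hlog
    have conv : ∀ (w : Fin n → ℝ),
        (∑ i : Fin n, (if (i:ℕ) < j then w i else 0)) =
        ∑ i ∈ Finset.range j, (if h : i < n then w ⟨i, h⟩ else 0) := by
      intro w
      have e1 : (∑ i : Fin n, (if (i:ℕ) < j then w i else 0)) =
          ∑ i : Fin n, (fun m : ℕ => if m < j then
            (if h : m < n then w ⟨m, h⟩ else 0) else 0) (i : ℕ) := by
        refine Finset.sum_congr rfl fun i _ => ?_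
        by_cases h : (i:ℕ) < j <;> simp [h, i.isLt]
      rw [e1]
      exact (Fin.sum_univ_eq_sum_range (fun m : ℕ => if m < j then
        (if h : m < n then w ⟨m, h⟩ else 0) else 0) n).trans
        (sum_ite_range n j hj _)
    calc (0:ℝ) ≤ (∑ i ∈ Finset.range j, (if h : i < n then p ⟨i,h⟩ else 0))
          - ∑ i ∈ Finset.range j, (if h : i < n then q ⟨i,h⟩ else 0) := by
            rw [← conv p, ← conv q]; exact sub_nonneg.2 hlog
      _ = _ := by
        rw [← Finset.sum_sub_distrib]
        refine Finset.sum_congr rfl fun i _ => ?_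
        by_cases h : i < n <;> simp [h]
  -- the interpolation path
  set y : Fin n → ℝ → ℝ := fun k τ => q k + τ * (p k - q k) with hydef
  set u : Fin n → ℝ → ℝ := fun k τ => c k * Real.exp (y k τ) with hudef
  have hupos : ∀ k τ, 0 < u k τ := fun k τ => mul_pos (hcpos k) (Real.exp_pos _)
  set G : ℝ → ℝ := fun τ => ∑ k, (u k τ) * r (u k τ) / c k with hGdef
  set Φ : ℝ → ℝ := fun τ => ∑ k, ((u k τ) * D (u k τ) / c k) * (p k - q k) with hΦdef
  have hG : ∀ τ, HasDerivAt G (Φ τ) τ := by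
    intro τ
    apply HasDerivAt.fun_sum
    intro k _
    have h1 : HasDerivAt (fun τ' => q k + τ' * (p k - q k)) (p k - q k) τ := by
      simpa using ((hasDerivAt_id τ).mul_const (p k - q k)).const_add (q k)
    have h2 := h1.exp
    have h3 := HasDerivAt.const_mul (c k) h2
    have h4 := (hD (u k τ) (hupos k τ)).comp τ h3
    have h5 := h4.div_const (c k)
    have h6 : HasDerivAt (fun τ' => (u k τ') * r (u k τ') / c k)
        (D (u k τ) * (c k * (Real.exp (y k τ) * (p k - q k))) / c k) τ := h5
    refine h6.congr_deriv ?_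
    simp only [hudef]
    ring
  -- nonnegativity of the derivative on [0,1]
  have hΦnonneg : ∀ τ ∈ Icc (0:ℝ) 1, 0 ≤ Φ τ := by
    intro τ hτ
    obtain ⟨hτ0, hτ1⟩ := hτ
    have hymono : ∀ i j : Fin n, i ≤ j → y i τ ≤ y j τ := by
      intro i j h
      have h1 := hpmono i j h
      have h2 := hqmono i j h
      have h3 : 0 ≤ τ * (p j - p i) := mul_nonneg hτ0 (by linarith)
      have h4 : 0 ≤ (1 - τ) * (q j - q i) := mul_nonneg (by linarith) (by linarith)
      simp only [hydef]
      nlinarith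
    have humono : ∀ i j : Fin n, i ≤ j → u i τ ≤ u j τ := by
      intro i j h
      exact mul_le_mul (hcmono i j h) (Real.exp_le_exp.2 (hymono i j h))
        (Real.exp_pos _).le (hcpos j).le
    set a : Fin n → ℝ := fun k => u k τ * D (u k τ) / c k with hadef
    have hanonneg : ∀ k, 0 ≤ a k :=
      fun k => div_nonneg (mul_nonneg (hupos k τ).le
        (hDnonneg _ (hupos k τ))) (hcpos k).le
    have haanti : ∀ i j : Fin n, i ≤ j → a j ≤ a i := by
      intro i j h
      have hUDij : u j τ * D (u j τ) ≤ u i τ * D (u i τ) :=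
        hUD (hupos i τ) (hupos j τ) (humono i j h)
      have hnum : 0 ≤ u j τ * D (u j τ) :=
        mul_nonneg (hupos j τ).le (hDnonneg _ (hupos j τ))
      calc a j = u j τ * D (u j τ) / c j := rfl
        _ ≤ u j τ * D (u j τ) / c i :=
            div_le_div_of_nonneg_left hnum (hcpos i) (hcmono i j h)
        _ ≤ u i τ * D (u i τ) / c i := (div_le_div_iff_of_pos_right (hcpos i)).2 hUDij
        _ = a i := rfl
    -- apply Abel summation
    have key : Φ τ = ∑ i ∈ Finset.range n,
        (if h : i < n then a ⟨i, h⟩ else 0) *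
        (if h : i < n then p ⟨i, h⟩ - q ⟨i, h⟩ else 0) := by
      have e1 : Φ τ = ∑ k : Fin n, (fun m : ℕ =>
          (if h : m < n then a ⟨m, h⟩ else 0) *
          (if h : m < n then p ⟨m, h⟩ - q ⟨m, h⟩ else 0)) (k : ℕ) := by
        refine Finset.sum_congr rfl fun k _ => ?_
        simp [k.isLt]
        exact Or.inl rfl
      rw [e1]
      exact Fin.sum_univ_eq_sum_range (fun m : ℕ =>
          (if h : m < n then a ⟨m, h⟩ else 0) *
          (if h : m < n then p ⟨m, h⟩ - q ⟨m, h⟩ else 0)) n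
    rw [key]
    apply abel_nonneg'
    · intro i j hij hjn
      simp only [dif_pos hjn, dif_pos (lt_of_le_of_lt hij hjn)]
      exact haanti ⟨i, _⟩ ⟨j, _⟩ hij
    · intro i hi
      simp only [dif_pos hi]
      exact hanonneg _
    · exact hPS
  -- monotone on [0,1]
  have hmonoG : MonotoneOn G (Icc (0:ℝ) 1) := by
    apply monotoneOn_of_deriv_nonneg (convex_Icc 0 1)
    · exact fun x _ => (hG x).differentiableAt.continuousAt.continuousWithinAt
    · exact fun x _ => (hG x).differentiableAt.differentiableWithinAt
    · intro x hx
      rw [interior_Icc] at hx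
      rw [(hG x).deriv]
      exact hΦnonneg x ⟨hx.1.le, hx.2.le⟩
  have hfinal : G 0 ≤ G 1 := hmonoG ⟨le_rfl, zero_le_one⟩ ⟨zero_le_one, le_rfl⟩ zero_le_one
  -- identify the endpoints
  have hG0 : G 0 = ∑ k, (1 / ξ k) * r ((t - lam k) / ξ k) := by
    refine Finset.sum_congr rfl fun k _ => ?_
    have hy0 : y k 0 = q k := by simp [hydef]
    have hu0 : u k 0 = (t - lam k) / ξ k := by
      simp only [hudef, hy0, hexpq, hcdef, mul_one_div]
    rw [hu0]
    have hξ : ξ k ≠ 0 := (hξpos k).ne'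
    have hc : t - lam k ≠ 0 := (hcpos k).ne'
    simp only [hcdef]
    field_simp
  have hG1 : G 1 = ∑ k, (1 / σ k) * r ((t - lam k) / σ k) := by
    refine Finset.sum_congr rfl fun k _ => ?_
    have hy1 : y k 1 = p k := by simp [hydef]
    have hu1 : u k 1 = (t - lam k) / σ k := by
      simp only [hudef, hy1, hexpp, hcdef, mul_one_div]
    rw [hu1]
    have hσ : σ k ≠ 0 := (hσpos k).ne'
    have hc : t - lam k ≠ 0 := (hcpos k).ne'
    simp only [hcdef]
    field_simp
  rw [← hG0, ← hG1]
  exact hfinal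
end

section
/- Location-parameter comparison for series systems (independent case): Let F, G have hazard rates r_X, r_Y with r_X(u) >= r_Y(u) for all u (X <=_hr Y), r_Y increasing, and u^2·r_Y'(u) decreasing in u. Let lambda, mu, sigma be decreasing vectors (sigma positive). If lambda <=_w mu, i.e. sum_{i=j}^n lambda_(i) <= sum_{i=j}^n mu_(i) for all j, then for all relevant t: sum_k (1/sigma_k) r_X((t - lambda_k)/sigma_k) >= sum_k (1/sigma_k) r_Y((t - mu_k)/sigma_k). -/
open Set Finset

/-- Abel-summation bound: if `c` is increasing up to `n` and all partial sums of
`d` are nonnegative, then `∑ c i * d i ≤ c n * ∑ d i`. -/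
private lemma abel_aux (c d : ℕ → ℝ) :
    ∀ n : ℕ, (∀ i j, i ≤ j → j ≤ n → c i ≤ c j) →
      (∀ j, j ≤ n → 0 ≤ ∑ i ∈ Finset.range j, d i) →
      ∑ i ∈ Finset.range n, c i * d i ≤ c n * ∑ i ∈ Finset.range n, d i := by
  intro n
  induction n with
  | zero => simp
  | succ m ih =>
    intro hc hd
    have h1 : ∑ i ∈ Finset.range m, c i * d i ≤ c m * ∑ i ∈ Finset.range m, d i :=
      ih (fun i j hij hj => hc i j hij (hj.trans m.le_succ))
        (fun j hj => hd j (hj.trans m.le_succ))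
    have hP : 0 ≤ ∑ i ∈ Finset.range (m + 1), d i := hd (m + 1) le_rfl
    have h2 : c m * ∑ i ∈ Finset.range (m + 1), d i ≤
        c (m + 1) * ∑ i ∈ Finset.range (m + 1), d i :=
      mul_le_mul_of_nonneg_right (hc m (m + 1) m.le_succ le_rfl) hP
    calc ∑ i ∈ Finset.range (m + 1), c i * d i
        = (∑ i ∈ Finset.range m, c i * d i) + c m * d m := Finset.sum_range_succ _ m
      _ ≤ c m * (∑ i ∈ Finset.range m, d i) + c m * d m := by linarith
      _ = c m * ∑ i ∈ Finset.range (m + 1), d i := by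
          rw [Finset.sum_range_succ]; ring
      _ ≤ c (m + 1) * ∑ i ∈ Finset.range (m + 1), d i := h2

/-- The derivative of a function monotone on `Ioi 0` is nonnegative there. -/
private lemma deriv_nonneg_of_monotoneOn {rY rY' : ℝ → ℝ}
    (hrYmono : MonotoneOn rY (Set.Ioi 0))
    (hrY' : ∀ u ∈ Set.Ioi (0:ℝ), HasDerivAt rY (rY' u) u) {u : ℝ} (hu : 0 < u) :
    0 ≤ rY' u := by
  have h1 : HasDerivWithinAt rY (rY' u) (Set.Ioi u) u :=
    (hrY' u hu).hasDerivWithinAt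
  rw [hasDerivWithinAt_iff_tendsto_slope] at h1
  have hs : Set.Ioi u \ {u} = Set.Ioi u := by
    apply Set.diff_singleton_eq_self
    simp
  rw [hs] at h1
  refine ge_of_tendsto h1 ?_
  filter_upwards [self_mem_nhdsWithin] with v hv
  have hv' : u < v := hv
  rw [slope_def_field]
  apply div_nonneg
  · have := hrYmono (Set.mem_Ioi.mpr hu) (Set.mem_Ioi.mpr (hu.trans hv')) hv'.le
    linarith
  · linarith

/-- Location-parameter comparison for independent series systems
(Theorem 13 of the paper): `X ≤_hr Y`, `r_Y` increasing, `u²·r_Y'(u)`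
decreasing and `λ ≤_w μ` give the hazard-rate ordering of the minima. -/
theorem series_location_comparison {n : ℕ}
    (F G f g : ℝ → ℝ) (rX rY rY' : ℝ → ℝ) (lam μ σ : Fin n → ℝ)
    (hF' : ∀ u, HasDerivAt F (f u) u) (hG' : ∀ u, HasDerivAt G (g u) u)
    (hrX : ∀ u, rX u = f u / (1 - F u)) (hrY : ∀ u, rY u = g u / (1 - G u))
    (hhr : ∀ u, rY u ≤ rX u)
    (hrYmono : MonotoneOn rY (Ioi 0))
    (hrY' : ∀ u ∈ Ioi (0:ℝ), HasDerivAt rY (rY' u) u)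
    (hU2 : AntitoneOn (fun u => u ^ 2 * rY' u) (Ioi 0))
    (hlamdec : ∀ i j : Fin n, i ≤ j → lam j ≤ lam i)
    (hμdec : ∀ i j : Fin n, i ≤ j → μ j ≤ μ i)
    (hσpos : ∀ i, 0 < σ i)
    (hσdec : ∀ i j : Fin n, i ≤ j → σ j ≤ σ i)
    -- `λ` is weakly submajorized by `μ`: sums of the `j` largest entries
    -- (the initial entries, since the vectors are decreasing) are compared
    (hw : ∀ j ≤ n, (∑ i : Fin n, if (i : ℕ) < j then lam i else 0) ≤
      ∑ i : Fin n, if (i : ℕ) < j then μ i else 0) :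
    ∀ t, (∀ k, lam k < t) → (∀ k, μ k < t) →
      (∑ k, (1 / σ k) * rY ((t - μ k) / σ k)) ≤
        ∑ k, (1 / σ k) * rX ((t - lam k) / σ k) := by
  intro t hlt hμt
  -- Abel-type consequence of weak submajorization on `Fin n`
  have abel_fin : ∀ c : Fin n → ℝ, (∀ k, c k ≤ 0) →
      (∀ i j : Fin n, i ≤ j → c i ≤ c j) →
      (∑ k, c k * (μ k - lam k)) ≤ 0 := by
    intro c hc0 hcmono
    set cN : ℕ → ℝ := fun i => if h : i < n then c ⟨i, h⟩ else 0 with hcN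
    set dN : ℕ → ℝ := fun i => if h : i < n then μ ⟨i, h⟩ - lam ⟨i, h⟩ else 0 with hdN
    have hkey : ∑ i ∈ Finset.range n, cN i * dN i ≤
        cN n * ∑ i ∈ Finset.range n, dN i := by
      apply abel_aux
      · intro i j hij hj
        rcases lt_or_ge j n with hjn | hjn
        · have hin : i < n := lt_of_le_of_lt hij hjn
          simp only [hcN, dif_pos hin, dif_pos hjn]
          exact hcmono ⟨i, hin⟩ ⟨j, hjn⟩ hij
        · have hjn' : ¬ j < n := not_lt.mpr hjn
          simp only [hcN, dif_neg hjn']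
          rcases lt_or_ge i n with hin | hin
          · simp only [dif_pos hin]; exact hc0 _
          · simp only [dif_neg (not_lt.mpr hin)]; exact le_refl 0
      · intro j hj
        have e1 : ∑ i ∈ Finset.range j, dN i
            = ∑ i ∈ Finset.range n, (if i < j then dN i else 0) := by
          have e1a : ∑ i ∈ Finset.range j, dN i
              = ∑ i ∈ Finset.range j, (if i < j then dN i else 0) :=
            Finset.sum_congr rfl fun i hi => (if_pos (Finset.mem_range.mp hi)).symm
          rw [e1a]
          exact Finset.sum_subset (Finset.range_subset_range.mpr hj)
            (fun i _ hi => if_neg fun h => hi (Finset.mem_range.mpr h))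
        have e2 : ∑ i ∈ Finset.range n, (if i < j then dN i else 0)
            = ∑ i : Fin n, (if (i : ℕ) < j then μ i - lam i else 0) := by
          rw [← Fin.sum_univ_eq_sum_range (fun i => if i < j then dN i else 0) n]
          refine Finset.sum_congr rfl fun i _ => ?_
          by_cases h : (i : ℕ) < j <;> simp [h, hdN, i.isLt]
        have e3 : ∑ i : Fin n, (if (i : ℕ) < j then μ i - lam i else 0)
            = (∑ i : Fin n, if (i : ℕ) < j then μ i else 0)
              - ∑ i : Fin n, if (i : ℕ) < j then lam i else 0 := by
          rw [← Finset.sum_sub_distrib]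
          refine Finset.sum_congr rfl fun i _ => ?_
          by_cases h : (i : ℕ) < j <;> simp [h]
        rw [e1, e2, e3, sub_nonneg]
        exact hw j hj
    have hcNn : cN n = 0 := by simp [hcN]
    have e4 : ∑ i ∈ Finset.range n, cN i * dN i
        = ∑ k : Fin n, c k * (μ k - lam k) := by
      rw [← Fin.sum_univ_eq_sum_range (fun i => cN i * dN i) n]
      refine Finset.sum_congr rfl fun i _ => ?_
      simp [hcN, hdN, i.isLt]
    rw [e4, hcNn, zero_mul] at hkey
    exact hkey
  -- the convex path from `lam` to `μ` stays below `t` and stays decreasing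
  have hν_lt : ∀ θ ∈ Icc (0:ℝ) 1, ∀ k, lam k + θ * (μ k - lam k) < t := by
    intro θ hθ k
    rcases le_total (μ k) (lam k) with h | h
    · nlinarith [hθ.1, hθ.2, hlt k, mul_nonneg hθ.1 (sub_nonneg.mpr h)]
    · nlinarith [hθ.1, hθ.2, hμt k,
        mul_nonneg (sub_nonneg.mpr hθ.2) (sub_nonneg.mpr h)]
  have hν_ord : ∀ θ ∈ Icc (0:ℝ) 1, ∀ i j : Fin n, i ≤ j →
      lam j + θ * (μ j - lam j) ≤ lam i + θ * (μ i - lam i) := by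
    intro θ hθ i j hij
    nlinarith [mul_nonneg hθ.1 (sub_nonneg.mpr (hμdec i j hij)),
      mul_nonneg (sub_nonneg.mpr hθ.2) (sub_nonneg.mpr (hlamdec i j hij))]
  -- derivative of the path functional
  have hderiv : ∀ θ ∈ Icc (0:ℝ) 1,
      HasDerivAt (fun θ => ∑ k, (1 / σ k) * rY ((t - (lam k + θ * (μ k - lam k))) / σ k))
        (∑ k, (-(rY' ((t - (lam k + θ * (μ k - lam k))) / σ k)) / (σ k) ^ 2)
          * (μ k - lam k)) θ := by
    intro θ hθ
    apply HasDerivAt.fun_sum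
    intro k _
    have hσk := hσpos k
    have hpos : 0 < (t - (lam k + θ * (μ k - lam k))) / σ k :=
      div_pos (by linarith [hν_lt θ hθ k]) hσk
    have ha : HasDerivAt (fun θ : ℝ => (t - (lam k + θ * (μ k - lam k))) / σ k)
        (-(μ k - lam k) / σ k) θ := by
      have h1 : HasDerivAt (fun θ : ℝ => t - (lam k + θ * (μ k - lam k)))
          (-(μ k - lam k)) θ := by
        simpa using
          (((hasDerivAt_id θ).mul_const (μ k - lam k)).const_add (lam k)).const_sub t
      exact h1.div_const _
    have h2 : HasDerivAt (fun θ : ℝ => rY ((t - (lam k + θ * (μ k - lam k))) / σ k))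
        (rY' ((t - (lam k + θ * (μ k - lam k))) / σ k) * (-(μ k - lam k) / σ k)) θ :=
      (hrY' _ hpos).comp θ ha
    have h3 := h2.const_mul (1 / σ k)
    convert h3 using 1
    · rfl
    field_simp
  -- nonpositivity of the derivative, via Schur-type slope comparison and Abel
  have hD_nonpos : ∀ θ ∈ Icc (0:ℝ) 1,
      (∑ k, (-(rY' ((t - (lam k + θ * (μ k - lam k))) / σ k)) / (σ k) ^ 2)
        * (μ k - lam k)) ≤ 0 := by
    intro θ hθ
    apply abel_fin
    · intro k
      have hσk := hσpos k
      have hpos : 0 < (t - (lam k + θ * (μ k - lam k))) / σ k :=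
        div_pos (by linarith [hν_lt θ hθ k]) hσk
      have h1 : 0 ≤ rY' ((t - (lam k + θ * (μ k - lam k))) / σ k) :=
        deriv_nonneg_of_monotoneOn hrYmono hrY' hpos
      have h2 : 0 < (σ k) ^ 2 := by positivity
      exact div_nonpos_of_nonpos_of_nonneg (by linarith) h2.le
    · intro i j hij
      have hσi := hσpos i
      have hσj := hσpos j
      set si : ℝ := t - (lam i + θ * (μ i - lam i)) with hsi
      set sj : ℝ := t - (lam j + θ * (μ j - lam j)) with hsj
      have hsi_pos : 0 < si := by
        have := hν_lt θ hθ i; simp only [hsi]; linarith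
      have hsj_pos : 0 < sj := by
        have := hν_lt θ hθ j; simp only [hsj]; linarith
      have hss : si ≤ sj := by
        have := hν_ord θ hθ i j hij
        simp only [hsi, hsj]; linarith
      have hui_pos : 0 < si / σ i := div_pos hsi_pos hσi
      have huj_pos : 0 < sj / σ j := div_pos hsj_pos hσj
      have hu_le : si / σ i ≤ sj / σ j :=
        div_le_div₀ hsj_pos.le hss hσj (hσdec i j hij)
      -- antitonicity of u² rY'(u)
      have hw2 : (sj / σ j) ^ 2 * rY' (sj / σ j) ≤ (si / σ i) ^ 2 * rY' (si / σ i) :=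
        hU2 (Set.mem_Ioi.mpr hui_pos) (Set.mem_Ioi.mpr huj_pos) hu_le
      have hwpos : 0 ≤ (si / σ i) ^ 2 * rY' (si / σ i) :=
        mul_nonneg (by positivity)
          (deriv_nonneg_of_monotoneOn hrYmono hrY' hui_pos)
      have hsq : si ^ 2 ≤ sj ^ 2 := pow_le_pow_left₀ hsi_pos.le hss 2
      have hkey : ((sj / σ j) ^ 2 * rY' (sj / σ j)) / sj ^ 2
          ≤ ((si / σ i) ^ 2 * rY' (si / σ i)) / si ^ 2 :=
        div_le_div₀ hwpos hw2 (by positivity) hsq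
      have ei : ((si / σ i) ^ 2 * rY' (si / σ i)) / si ^ 2 = rY' (si / σ i) / (σ i) ^ 2 := by
        field_simp
      have ej : ((sj / σ j) ^ 2 * rY' (sj / σ j)) / sj ^ 2 = rY' (sj / σ j) / (σ j) ^ 2 := by
        field_simp
      rw [ei, ej] at hkey
      simp only [neg_div]
      linarith
  -- the path functional is antitone on [0,1]
  have hΦ : AntitoneOn (fun θ => ∑ k, (1 / σ k)
      * rY ((t - (lam k + θ * (μ k - lam k))) / σ k)) (Icc 0 1) := by
    apply antitoneOn_of_deriv_nonpos (convex_Icc 0 1)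
    · intro θ hθ
      exact (hderiv θ hθ).continuousAt.continuousWithinAt
    · intro θ hθ
      rw [interior_Icc] at hθ
      exact (hderiv θ (Ioo_subset_Icc_self hθ)).differentiableAt.differentiableWithinAt
    · intro θ hθ
      rw [interior_Icc] at hθ
      rw [(hderiv θ (Ioo_subset_Icc_self hθ)).deriv]
      exact hD_nonpos θ (Ioo_subset_Icc_self hθ)
  have h01 := hΦ (left_mem_Icc.mpr zero_le_one) (right_mem_Icc.mpr zero_le_one) zero_le_one
  have e0 : ∑ k, (1 / σ k) * rY ((t - (lam k + (0:ℝ) * (μ k - lam k))) / σ k)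
      = ∑ k, (1 / σ k) * rY ((t - lam k) / σ k) := by
    refine Finset.sum_congr rfl fun k _ => ?_
    norm_num
  have e1 : ∑ k, (1 / σ k) * rY ((t - (lam k + (1:ℝ) * (μ k - lam k))) / σ k)
      = ∑ k, (1 / σ k) * rY ((t - μ k) / σ k) := by
    refine Finset.sum_congr rfl fun k _ => ?_
    congr 2
    ring
  have step2 : (∑ k, (1 / σ k) * rY ((t - μ k) / σ k)) ≤
      ∑ k, (1 / σ k) * rY ((t - lam k) / σ k) := by
    calc (∑ k, (1 / σ k) * rY ((t - μ k) / σ k))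
        = ∑ k, (1 / σ k) * rY ((t - (lam k + (1:ℝ) * (μ k - lam k))) / σ k) := e1.symm
      _ ≤ ∑ k, (1 / σ k) * rY ((t - (lam k + (0:ℝ) * (μ k - lam k))) / σ k) := h01
      _ = ∑ k, (1 / σ k) * rY ((t - lam k) / σ k) := e0
  have step1 : (∑ k, (1 / σ k) * rY ((t - lam k) / σ k)) ≤
      ∑ k, (1 / σ k) * rX ((t - lam k) / σ k) := by
    refine Finset.sum_le_sum fun k _ => ?_
    have hσk := hσpos k
    exact mul_le_mul_of_nonneg_left (hhr _) (by positivity)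
  exact step2.trans step1
end
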